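/- arXiv:1310.6113 — 2 statements merged into one kernel-verified Lean document; each statement's English description precedes it below -/
import Mathlib

section
/- Fix integers n₁ ≥ 1 and n₂ ≥ 2 and set n = n₁ + n₂. For all integers m₁, m₂ with 1 ≤ m₁ ≤ n₁ and 1 ≤ m₂ ≤ n₂ − 1 one has 1/n < SS₁(1, n₂−1, n₁, n₂) ≤ SS₁(m₁, m₂, n₁, n₂) ≤ SS₁(n₁, 1, n₁, n₂) < 1/n₁, and for every integer c with 1 ≤ c ≤ n₁ one has SS₁(c, 0, n₁, n₂) = 1/n₁. Correspondingly, 1/n > SS₂(1, n₂−1, n₁, n₂) ≥ SS₂(m₁, m₂, n₁, n₂) ≥ SS₂(n₁, 1, n₁, n₂) > 0 and SS₂(c, 0, n₁, n₂) = 0 for every 1 ≤ c ≤ n₁. -/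
open Finset

/-- Winning predicate of the bipartite complete game with minimum `G(n₁,n₂,a,b)` on the player
set `Fin (n₁ + n₂)`, where the players `i < n₁` are of type 1 and the remaining ones of type 2:
a coalition `S` is winning iff `|S ∩ T₁| ≥ a` and `|S| ≥ a + b`. -/
def BipWinning (n1 n2 a b : ℕ) (S : Finset (Fin (n1 + n2))) : Prop :=
  a ≤ (S.filter fun i : Fin (n1 + n2) => (i : ℕ) < n1).card ∧ a + b ≤ S.card

/-- The number of swings of player `i`: coalitions `S` with `i ∈ S`, `S` winning and
`S ∖ {i}` losing. -/
noncomputable def swingCount {n : ℕ} (Win : Finset (Fin n) → Prop) (i : Fin n) : ℕ :=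
  Set.ncard {S : Finset (Fin n) | i ∈ S ∧ Win S ∧ ¬ Win (S.erase i)}

/-- The number of swings of player `i` of cardinality `s`. -/
noncomputable def swingCountCard {n : ℕ} (Win : Finset (Fin n) → Prop) (i : Fin n) (s : ℕ) : ℕ :=
  Set.ncard {S : Finset (Fin n) | S.card = s ∧ i ∈ S ∧ Win S ∧ ¬ Win (S.erase i)}

/-- The Shapley–Shubik power index of player `i`:
`SS_i = Σ_{s=1}^{n} ((s-1)!(n-s)!/n!) · c_i^s`. -/
noncomputable def SSindex {n : ℕ} (Win : Finset (Fin n) → Prop) (i : Fin n) : ℚ :=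
  ∑ s ∈ Finset.Icc 1 n,
    ((Nat.factorial (s - 1) : ℚ) * (Nat.factorial (n - s) : ℚ) / (Nat.factorial n : ℚ)) *
      (swingCountCard Win i s : ℚ)

instance (n1 n2 a b : ℕ) : DecidablePred (BipWinning n1 n2 a b) := fun _ =>
  instDecidableAnd

lemma swingCountCard_eq_card {n : ℕ} (Win : Finset (Fin n) → Prop) [DecidablePred Win]
    (i : Fin n) (s : ℕ) :
    swingCountCard Win i s =
      (univ.filter fun S : Finset (Fin n) => S.card = s ∧ i ∈ S ∧ Win S ∧ ¬ Win (S.erase i)).card := by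
  rw [swingCountCard, ← Set.ncard_coe_finset]
  congr 1
  ext S
  simp

-- cardinality of type-1 set
lemma card_type1 (n1 n2 : ℕ) :
    ((univ : Finset (Fin (n1 + n2))).filter fun x : Fin (n1 + n2) => (x : ℕ) < n1).card = n1 := by
  rw [← Fintype.card_subtype]
  have e : {x : Fin (n1 + n2) // (x : ℕ) < n1} ≃ Fin n1 :=
    { toFun := fun x => ⟨x.1, x.2⟩
      invFun := fun y => ⟨⟨y.1, lt_of_lt_of_le y.2 (Nat.le_add_right _ _)⟩, y.2⟩
      left_inv := fun x => rfl
      right_inv := fun y => rfl }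
  rw [Fintype.card_congr e, Fintype.card_fin]

lemma card_type2 (n1 n2 : ℕ) :
    ((univ : Finset (Fin (n1 + n2))).filter fun x : Fin (n1 + n2) => ¬ ((x : ℕ) < n1)).card = n2 := by
  have h := Finset.card_filter_add_card_filter_not
    (s := (univ : Finset (Fin (n1 + n2)))) (p := fun x => (x : ℕ) < n1)
  rw [card_type1, card_univ, Fintype.card_fin] at h
  omega

section Efficiency
variable {n : ℕ} (Win : Finset (Fin n) → Prop) [DecidablePred Win]

/-- number of winning coalitions of size `s` -/
def Wcount (s : ℕ) : ℕ := (univ.filter fun S : Finset (Fin n) => S.card = s ∧ Win S).card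

lemma key_count (hmono : ∀ (S : Finset (Fin n)) x, Win S → Win (insert x S))
    (s : ℕ) (hs1 : 1 ≤ s) (hsn : s ≤ n) :
    (∑ i : Fin n, swingCountCard Win i s) + (n - s + 1) * Wcount Win (s - 1)
      = s * Wcount Win s := by
  classical
  -- A : pairs (S, i) with S winning of card s and i ∈ S
  set A : Finset (Σ _ : Finset (Fin n), Fin n) :=
    (univ.filter fun S : Finset (Fin n) => S.card = s ∧ Win S).sigma fun S => S with hA
  have hcardA : A.card = s * Wcount Win s := by
    rw [hA, card_sigma]
    rw [Finset.sum_congr rfl (fun S hS => (mem_filter.mp hS).2.1)]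
    rw [sum_const, smul_eq_mul, mul_comm]; rfl
  have hsplit := Finset.card_filter_add_card_filter_not
    (s := A) (p := fun p => Win (p.1.erase p.2))
  -- the part with losing erase equals the sum of swing counts
  have h1 : (A.filter fun p => ¬ Win (p.1.erase p.2)).card
      = ∑ i : Fin n, swingCountCard Win i s := by
    rw [Finset.sum_congr rfl (fun i _ => swingCountCard_eq_card Win i s), ← card_sigma]
    apply Finset.card_bij' (fun p _ => (⟨p.2, p.1⟩ : Σ _ : Fin n, Finset (Fin n)))
      (fun p _ => (⟨p.2, p.1⟩ : Σ _ : Finset (Fin n), Fin n))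
    · rintro ⟨S, i⟩ hp
      simp only [hA, mem_filter, mem_sigma, mem_univ, true_and] at hp ⊢
      tauto
    · rintro ⟨i, S⟩ hp
      simp only [hA, mem_sigma, mem_univ, true_and, mem_filter] at hp ⊢
      tauto
    · rintro ⟨S, i⟩ _; rfl
    · rintro ⟨i, S⟩ _; rfl
  -- the part with winning erase
  have h2 : (A.filter fun p => Win (p.1.erase p.2)).card
      = (n - s + 1) * Wcount Win (s - 1) := by
    have : (n - s + 1) * Wcount Win (s - 1)
        = ((univ.filter fun T : Finset (Fin n) => T.card = s - 1 ∧ Win T).sigma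
            fun T => Tᶜ).card := by
      rw [card_sigma]
      rw [Finset.sum_congr rfl (fun T hT => ?_), sum_const, smul_eq_mul, mul_comm]
      · rfl
      · rw [card_compl, (mem_filter.mp hT).2.1, Fintype.card_fin]; omega
    rw [this]
    apply Finset.card_bij' (fun p _ => (⟨p.1.erase p.2, p.2⟩ : Σ _ : Finset (Fin n), Fin n))
      (fun p _ => (⟨insert p.2 p.1, p.2⟩ : Σ _ : Finset (Fin n), Fin n))
    · rintro ⟨S, x⟩ hp
      simp only [hA, mem_filter, mem_sigma, mem_univ, true_and] at hp ⊢
      refine ⟨⟨?_, hp.2⟩, mem_compl.mpr (notMem_erase _ _)⟩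
      rw [card_erase_of_mem hp.1.2, hp.1.1.1]
    · rintro ⟨T, x⟩ hp
      simp only [hA, mem_filter, mem_sigma, mem_univ, true_and, mem_compl] at hp ⊢
      have hx : x ∉ T := hp.2
      refine ⟨⟨⟨?_, hmono _ _ hp.1.2⟩, mem_insert_self _ _⟩, ?_⟩
      · rw [card_insert_of_notMem hx, hp.1.1]; omega
      · rw [erase_insert hx]; exact hp.1.2
    · rintro ⟨S, x⟩ hp
      simp only [hA, mem_filter, mem_sigma] at hp
      simp [insert_erase hp.1.2]
    · rintro ⟨T, x⟩ hp
      simp only [mem_sigma, mem_filter, mem_compl] at hp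
      simp [erase_insert hp.2]
  omega

lemma Wcount_n (h1 : Win (univ : Finset (Fin n))) : Wcount Win n = 1 := by
  rw [Wcount]
  have : (univ.filter fun S : Finset (Fin n) => S.card = n ∧ Win S) = {univ} := by
    ext S
    simp only [mem_filter, mem_univ, true_and, mem_singleton]
    constructor
    · rintro ⟨hc, -⟩
      exact Finset.card_eq_iff_eq_univ S |>.mp (by rw [hc, Fintype.card_fin])
    · rintro rfl
      exact ⟨by rw [card_univ, Fintype.card_fin], h1⟩
  rw [this, card_singleton]

lemma Wcount_zero (h0 : ¬ Win (∅ : Finset (Fin n))) : Wcount Win 0 = 0 := by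
  rw [Wcount, Finset.card_eq_zero, Finset.filter_eq_empty_iff]
  rintro S - ⟨hc, hw⟩
  rw [Finset.card_eq_zero] at hc
  exact h0 (hc ▸ hw)

lemma sum_SSindex (hmono : ∀ (S : Finset (Fin n)) x, Win S → Win (insert x S))
    (h0 : ¬ Win (∅ : Finset (Fin n))) (h1 : Win (univ : Finset (Fin n))) :
    ∑ i : Fin n, SSindex Win i = 1 := by
  classical
  have hn : 1 ≤ n := by
    by_contra h
    interval_cases n
    · exact h0 (by simpa using h1)
  set u : ℕ → ℚ := fun k => (Nat.factorial k : ℚ) * (Nat.factorial (n - k) : ℚ)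
      / (Nat.factorial n : ℚ) * (Wcount Win k : ℚ) with hu
  have main : ∀ s ∈ Finset.Icc 1 n,
      (∑ i : Fin n, ((Nat.factorial (s - 1) : ℚ) * (Nat.factorial (n - s) : ℚ)
        / (Nat.factorial n : ℚ)) * (swingCountCard Win i s : ℚ)) = u s - u (s - 1) := by
    intro s hs
    rw [Finset.mem_Icc] at hs
    rw [← Finset.mul_sum]
    have hkey := key_count Win hmono s hs.1 hs.2
    have hcast : (∑ i : Fin n, (swingCountCard Win i s : ℚ))
        = (s : ℚ) * (Wcount Win s : ℚ)
          - (((n - s : ℕ) : ℚ) + 1) * (Wcount Win (s-1) : ℚ) := by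
      have h2 : (∑ i : Fin n, (swingCountCard Win i s : ℚ))
          + (((n - s : ℕ) : ℚ) + 1) * (Wcount Win (s-1) : ℚ)
          = (s : ℚ) * (Wcount Win s : ℚ) := by
        exact_mod_cast congrArg (Nat.cast : ℕ → ℚ) hkey
      linarith
    rw [hcast, hu]
    have hfacs : (s : ℚ) * (Nat.factorial (s-1) : ℚ) = (Nat.factorial s : ℚ) := by
      have h' : s - 1 + 1 = s := by omega
      rw [← h', Nat.factorial_succ]; push_cast; ring_nf
    have hfacn : (((n - s : ℕ) : ℚ) + 1) * (Nat.factorial (n - s) : ℚ)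
        = (Nat.factorial (n - (s-1)) : ℚ) := by
      have h' : n - (s - 1) = (n - s) + 1 := by omega
      rw [h', Nat.factorial_succ]
      push_cast; ring
    have hnfac : (Nat.factorial n : ℚ) ≠ 0 := by
      exact_mod_cast Nat.factorial_ne_zero n
    field_simp
    rw [← hfacs, ← hfacn]
    ring
  have hstep : ∑ i : Fin n, SSindex Win i = ∑ s ∈ Finset.Icc 1 n, (u s - u (s-1)) := by
    simp only [SSindex]
    rw [Finset.sum_comm]
    exact Finset.sum_congr rfl main
  rw [hstep]
  have tele : ∑ s ∈ Finset.Icc 1 n, (u s - u (s-1)) = u n - u 0 := by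
    calc ∑ s ∈ Finset.Icc 1 n, (u s - u (s-1))
        = ∑ i ∈ Finset.range n, (u (i+1) - u i) := by
          refine Finset.sum_bij' (fun s _ => s - 1) (fun i _ => i + 1) ?_ ?_ ?_ ?_ ?_
          · intro a ha; simp only [Finset.mem_Icc, Finset.mem_range] at ha ⊢; omega
          · intro a ha; simp only [Finset.mem_Icc, Finset.mem_range] at ha ⊢; omega
          · intro a ha; simp only [Finset.mem_Icc, Finset.mem_range] at ha ⊢; omega
          · intro a ha; simp only [Finset.mem_Icc, Finset.mem_range] at ha ⊢; omega
          · intro a ha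
            rw [Finset.mem_Icc] at ha
            have h1' : a - 1 + 1 = a := by omega
            rw [h1']
      _ = u n - u 0 := Finset.sum_range_sub u n
  rw [tele, hu]
  simp only [Nat.sub_self, Nat.sub_zero, Nat.factorial_zero, Wcount_n Win h1, Wcount_zero Win h0]
  have hnfac : (Nat.factorial n : ℚ) ≠ 0 := by exact_mod_cast Nat.factorial_ne_zero n
  field_simp
  norm_num

end Efficiency

section Symmetry
variable {n1 n2 a b : ℕ}

lemma bip_map (e : Fin (n1+n2) ≃ Fin (n1+n2))
    (pres : ∀ x : Fin (n1+n2), ((e x : ℕ) < n1 ↔ (x : ℕ) < n1))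
    (S : Finset (Fin (n1+n2))) :
    BipWinning n1 n2 a b (S.map e.toEmbedding) ↔ BipWinning n1 n2 a b S := by
  unfold BipWinning
  rw [Finset.card_map]
  have h : (S.map e.toEmbedding).filter (fun x : Fin (n1+n2) => (x:ℕ) < n1)
      = (S.filter fun x : Fin (n1+n2) => ((e x : ℕ) < n1)).map e.toEmbedding :=
    Finset.filter_map
  have h2 : (S.filter fun x : Fin (n1+n2) => ((e x : ℕ) < n1))
      = S.filter fun x : Fin (n1+n2) => ((x:ℕ) < n1) :=
    Finset.filter_congr (fun x _ => by simp [pres x])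
  rw [h, h2, Finset.card_map]

lemma swing_fwd (e : Fin (n1+n2) ≃ Fin (n1+n2))
    (pres : ∀ x : Fin (n1+n2), ((e x : ℕ) < n1 ↔ (x : ℕ) < n1))
    (i : Fin (n1+n2)) (s : ℕ) (S : Finset (Fin (n1+n2)))
    (hS : S.card = s ∧ i ∈ S ∧ BipWinning n1 n2 a b S ∧ ¬ BipWinning n1 n2 a b (S.erase i)) :
    (S.map e.toEmbedding).card = s ∧ e i ∈ S.map e.toEmbedding
      ∧ BipWinning n1 n2 a b (S.map e.toEmbedding)
      ∧ ¬ BipWinning n1 n2 a b ((S.map e.toEmbedding).erase (e i)) := by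
  obtain ⟨hc, hm, hw, hl⟩ := hS
  refine ⟨by rw [Finset.card_map, hc], Finset.mem_map' _ |>.mpr hm, (bip_map e pres S).mpr hw, ?_⟩
  intro hx
  rw [← Equiv.coe_toEmbedding, ← Finset.map_erase] at hx
  exact hl ((bip_map e pres _).mp hx)

lemma swingCountCard_relabel (e : Fin (n1+n2) ≃ Fin (n1+n2))
    (pres : ∀ x : Fin (n1+n2), ((e x : ℕ) < n1 ↔ (x : ℕ) < n1))
    (i : Fin (n1+n2)) (s : ℕ) :
    swingCountCard (BipWinning n1 n2 a b) (e i) s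
      = swingCountCard (BipWinning n1 n2 a b) i s := by
  unfold swingCountCard
  have pres' : ∀ x : Fin (n1+n2), ((e.symm x : ℕ) < n1 ↔ (x : ℕ) < n1) := by
    intro x
    conv_rhs => rw [← e.apply_symm_apply x]
    exact (pres _).symm
  have himg : {S : Finset (Fin (n1+n2)) | S.card = s ∧ e i ∈ S ∧ BipWinning n1 n2 a b S
        ∧ ¬ BipWinning n1 n2 a b (S.erase (e i))}
      = (fun S => S.map e.toEmbedding) ''
        {S | S.card = s ∧ i ∈ S ∧ BipWinning n1 n2 a b S
          ∧ ¬ BipWinning n1 n2 a b (S.erase i)} := by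
    ext T
    constructor
    · intro hT
      refine ⟨T.map e.symm.toEmbedding, ?_, ?_⟩
      · have := swing_fwd e.symm pres' (e i) s T hT
        simpa using this
      · show (T.map e.symm.toEmbedding).map e.toEmbedding = T
        ext x; simp
    · rintro ⟨S, hS, rfl⟩
      exact swing_fwd e pres i s S hS
  rw [himg, Set.ncard_image_of_injective _ (Finset.map_injective e.toEmbedding)]

lemma SSindex_type_eq (x y : Fin (n1+n2)) (hxy : ((x:ℕ) < n1 ↔ (y:ℕ) < n1)) :
    SSindex (BipWinning n1 n2 a b) x = SSindex (BipWinning n1 n2 a b) y := by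
  unfold SSindex
  refine Finset.sum_congr rfl fun s _ => ?_
  congr 1
  have pres : ∀ z : Fin (n1+n2), (((Equiv.swap y x z : Fin (n1+n2)) : ℕ) < n1 ↔ (z : ℕ) < n1) := by
    intro z
    rcases eq_or_ne z y with rfl | hzy
    · rw [Equiv.swap_apply_left]; exact hxy
    · rcases eq_or_ne z x with rfl | hzx
      · rw [Equiv.swap_apply_right]; exact hxy.symm
      · rw [Equiv.swap_apply_of_ne_of_ne hzy hzx]
  have h := swingCountCard_relabel (a := a) (b := b) (Equiv.swap y x) pres y s
  rw [Equiv.swap_apply_left] at h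
  exact_mod_cast h

lemma sum_SS_split (i j : Fin (n1+n2)) (hi : (i : ℕ) < n1) (hj : n1 ≤ (j : ℕ)) :
    ∑ x : Fin (n1+n2), SSindex (BipWinning n1 n2 a b) x
      = (n1 : ℚ) * SSindex (BipWinning n1 n2 a b) i
        + (n2 : ℚ) * SSindex (BipWinning n1 n2 a b) j := by
  classical
  rw [← Finset.sum_filter_add_sum_filter_not univ (fun x : Fin (n1+n2) => (x:ℕ) < n1)]
  congr 1
  · rw [Finset.sum_congr rfl (fun x hx => SSindex_type_eq x i
      (by simp only [Finset.mem_filter] at hx; simp [hx.2, hi])),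
      Finset.sum_const, card_type1, nsmul_eq_mul]
  · rw [Finset.sum_congr rfl (fun x hx => SSindex_type_eq x j
      (by simp only [Finset.mem_filter] at hx; simp [hx.2]; omega)),
      Finset.sum_const, card_type2, nsmul_eq_mul]

lemma bip_rel (ha1 : 1 ≤ a) (han : a ≤ n1) (hab : a + b ≤ n1 + n2)
    (i j : Fin (n1+n2)) (hi : (i : ℕ) < n1) (hj : n1 ≤ (j : ℕ)) :
    (n1 : ℚ) * SSindex (BipWinning n1 n2 a b) i
      + (n2 : ℚ) * SSindex (BipWinning n1 n2 a b) j = 1 := by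
  rw [← sum_SS_split i j hi hj]
  apply sum_SSindex
  · rintro S x ⟨h1, h2⟩
    exact ⟨le_trans h1 (Finset.card_le_card
        (Finset.filter_subset_filter _ (Finset.subset_insert _ _))),
      le_trans h2 (Finset.card_le_card (Finset.subset_insert _ _))⟩
  · rintro ⟨h1, -⟩
    simp only [Finset.filter_empty, Finset.card_empty] at h1
    omega
  · exact ⟨by rw [card_type1]; exact han,
      by rw [Finset.card_univ, Fintype.card_fin]; exact hab⟩

end Symmetry

section Type2
variable {n1 n2 : ℕ}

lemma filter_erase_type2 (j : Fin (n1+n2)) (hj : n1 ≤ (j:ℕ)) (S : Finset (Fin (n1+n2))) :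
    ((S.erase j).filter fun x : Fin (n1+n2) => (x:ℕ) < n1)
      = S.filter fun x : Fin (n1+n2) => (x:ℕ) < n1 := by
  ext x
  simp only [Finset.mem_filter, Finset.mem_erase]
  constructor
  · rintro ⟨⟨hne, hx⟩, h⟩; exact ⟨hx, h⟩
  · rintro ⟨hx, h⟩
    exact ⟨⟨fun he => by subst he; omega, hx⟩, h⟩

lemma swing2_char (a b : ℕ) (j : Fin (n1+n2)) (hj : n1 ≤ (j:ℕ)) (S : Finset (Fin (n1+n2))) :
    (j ∈ S ∧ BipWinning n1 n2 a b S ∧ ¬ BipWinning n1 n2 a b (S.erase j))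
      ↔ (S.card = a + b ∧ j ∈ S
          ∧ a ≤ (S.filter fun x : Fin (n1+n2) => (x:ℕ) < n1).card) := by
  unfold BipWinning
  rw [filter_erase_type2 j hj S]
  constructor
  · rintro ⟨hm, ⟨h1, h2⟩, h3⟩
    refine ⟨?_, hm, h1⟩
    rw [Finset.card_erase_of_mem hm] at h3
    push_neg at h3
    have := h3 h1
    omega
  · rintro ⟨hc, hm, ht⟩
    have hpos : 1 ≤ S.card := Finset.card_pos.mpr ⟨j, hm⟩
    refine ⟨hm, ⟨ht, by omega⟩, ?_⟩
    rintro ⟨-, h2⟩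
    rw [Finset.card_erase_of_mem hm] at h2
    omega

/-- swing count of a type-2 player at size `a+b` -/
def Nswing (n1 n2 a b : ℕ) (j : Fin (n1+n2)) : ℕ :=
  (univ.filter fun S : Finset (Fin (n1+n2)) => S.card = a + b ∧ j ∈ S
    ∧ a ≤ (S.filter fun x : Fin (n1+n2) => (x:ℕ) < n1).card).card

lemma swingCountCard_type2 (a b s : ℕ) (j : Fin (n1+n2)) (hj : n1 ≤ (j:ℕ)) :
    swingCountCard (BipWinning n1 n2 a b) j s
      = if s = a + b then Nswing n1 n2 a b j else 0 := by
  rw [swingCountCard_eq_card]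
  split_ifs with h
  · subst h
    rw [Nswing]
    congr 1
    ext S
    simp only [Finset.mem_filter, Finset.mem_univ, true_and]
    constructor
    · rintro ⟨hc, hsw⟩
      exact (swing2_char a b j hj S).mp hsw
    · intro hS
      exact ⟨hS.1, (swing2_char a b j hj S).mpr hS⟩
  · rw [Finset.card_eq_zero, Finset.filter_eq_empty_iff]
    rintro S - ⟨hc, hsw⟩
    have := ((swing2_char a b j hj S).mp hsw).1
    omega

lemma SS2_eq (a b : ℕ) (j : Fin (n1+n2)) (hj : n1 ≤ (j:ℕ)) (ha : 1 ≤ a)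
    (hab : a + b ≤ n1 + n2) :
    SSindex (BipWinning n1 n2 a b) j
      = ((Nat.factorial (a + b - 1) : ℚ) * (Nat.factorial (n1 + n2 - (a + b)) : ℚ)
          / (Nat.factorial (n1 + n2) : ℚ)) * (Nswing n1 n2 a b j : ℚ) := by
  unfold SSindex
  rw [Finset.sum_eq_single_of_mem (a+b) (Finset.mem_Icc.mpr ⟨by omega, hab⟩)]
  · rw [swingCountCard_type2 a b (a+b) j hj, if_pos rfl]
  · intro s _ hne
    rw [swingCountCard_type2 a b s j hj, if_neg hne]
    simp

lemma card_ineq_b (a b : ℕ) (j : Fin (n1+n2)) (hj : n1 ≤ (j:ℕ)) :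
    (n1 + n2 - (a + b)) * Nswing n1 n2 a b j ≤ (a + b) * Nswing n1 n2 a (b+1) j := by
  classical
  have hL : (n1 + n2 - (a + b)) * Nswing n1 n2 a b j
      = ((univ.filter fun S : Finset (Fin (n1+n2)) => S.card = a + b ∧ j ∈ S
          ∧ a ≤ (S.filter fun x : Fin (n1+n2) => (x:ℕ) < n1).card).sigma fun S => Sᶜ).card := by
    rw [card_sigma, Finset.sum_congr rfl (fun S hS => ?_), sum_const, smul_eq_mul, Nswing,
      mul_comm]
    rw [card_compl, Fintype.card_fin, (Finset.mem_filter.mp hS).2.1]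
  have hR : (a + b) * Nswing n1 n2 a (b+1) j
      = ((univ.filter fun S : Finset (Fin (n1+n2)) => S.card = a + (b+1) ∧ j ∈ S
          ∧ a ≤ (S.filter fun x : Fin (n1+n2) => (x:ℕ) < n1).card).sigma
            fun S => S.erase j).card := by
    rw [card_sigma, Finset.sum_congr rfl (fun S hS => ?_), sum_const, smul_eq_mul, Nswing,
      mul_comm]
    rw [Finset.card_erase_of_mem (Finset.mem_filter.mp hS).2.2.1,
      (Finset.mem_filter.mp hS).2.1]
    omega
  rw [hL, hR]
  apply Finset.card_le_card_of_injOn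
    (fun p => (⟨insert p.2 p.1, p.2⟩ : Σ _ : Finset (Fin (n1+n2)), Fin (n1+n2)))
  · rintro ⟨S, x⟩ hp
    simp only [Finset.mem_coe, Finset.mem_sigma, Finset.mem_filter, Finset.mem_univ, true_and,
      Finset.mem_compl] at hp ⊢
    obtain ⟨⟨hc, hm, ht⟩, hx⟩ := hp
    refine ⟨⟨?_, Finset.mem_insert_of_mem hm, ?_⟩, ?_⟩
    · rw [Finset.card_insert_of_notMem hx, hc]; omega
    · exact le_trans ht (Finset.card_le_card
        (Finset.filter_subset_filter _ (Finset.subset_insert _ _)))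
    · rw [Finset.mem_erase]
      exact ⟨fun he => hx (he ▸ hm), Finset.mem_insert_self _ _⟩
  · rintro ⟨S, x⟩ hp ⟨S', x'⟩ hp' h
    simp only [Finset.coe_sigma, Set.mem_sigma_iff, Finset.mem_coe, Finset.mem_filter,
      Finset.mem_univ, true_and, Finset.mem_compl] at hp hp'
    simp only [Sigma.mk.inj_iff, heq_eq_eq] at h
    obtain ⟨h1, rfl⟩ := h
    have hS : S = S' := by
      rw [← Finset.erase_insert hp.2, ← Finset.erase_insert hp'.2, h1]
    subst hS
    rfl
  done

lemma card_ineq_a (a b : ℕ) (j : Fin (n1+n2)) (hj : n1 ≤ (j:ℕ)) :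
    (a + b) * Nswing n1 n2 (a+1) b j ≤ (n1 + n2 - (a + b)) * Nswing n1 n2 a b j := by
  classical
  have hL : (a + b) * Nswing n1 n2 (a+1) b j
      = ((univ.filter fun S : Finset (Fin (n1+n2)) => S.card = (a+1) + b ∧ j ∈ S
          ∧ a + 1 ≤ (S.filter fun x : Fin (n1+n2) => (x:ℕ) < n1).card).sigma
            fun S => S.erase j).card := by
    rw [card_sigma, Finset.sum_congr rfl (fun S hS => ?_), sum_const, smul_eq_mul, Nswing,
      mul_comm]
    rw [Finset.card_erase_of_mem (Finset.mem_filter.mp hS).2.2.1,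
      (Finset.mem_filter.mp hS).2.1]
    omega
  have hR : (n1 + n2 - (a + b)) * Nswing n1 n2 a b j
      = ((univ.filter fun S : Finset (Fin (n1+n2)) => S.card = a + b ∧ j ∈ S
          ∧ a ≤ (S.filter fun x : Fin (n1+n2) => (x:ℕ) < n1).card).sigma fun S => Sᶜ).card := by
    rw [card_sigma, Finset.sum_congr rfl (fun S hS => ?_), sum_const, smul_eq_mul, Nswing,
      mul_comm]
    rw [card_compl, Fintype.card_fin, (Finset.mem_filter.mp hS).2.1]
  rw [hL, hR]
  apply Finset.card_le_card_of_injOn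
    (fun p => (⟨p.1.erase p.2, p.2⟩ : Σ _ : Finset (Fin (n1+n2)), Fin (n1+n2)))
  · rintro ⟨S, y⟩ hp
    simp only [Finset.mem_coe, Finset.mem_sigma, Finset.mem_filter, Finset.mem_univ, true_and,
      Finset.mem_compl] at hp ⊢
    obtain ⟨⟨hc, hm, ht⟩, hy⟩ := hp
    rw [Finset.mem_erase] at hy
    refine ⟨⟨?_, ?_, ?_⟩, Finset.notMem_erase _ _⟩
    · rw [Finset.card_erase_of_mem hy.2, hc]; omega
    · rw [Finset.mem_erase]; exact ⟨fun he => hy.1 he.symm, hm⟩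
    · have h1 : ((S.filter fun x : Fin (n1+n2) => (x:ℕ) < n1).erase y).card
          ≥ (S.filter fun x : Fin (n1+n2) => (x:ℕ) < n1).card - 1 :=
        Finset.pred_card_le_card_erase
      rw [← Finset.filter_erase] at h1
      omega
  · rintro ⟨S, y⟩ hp ⟨S', y'⟩ hp' h
    simp only [Finset.coe_sigma, Set.mem_sigma_iff, Finset.mem_coe, Finset.mem_filter,
      Finset.mem_univ, true_and] at hp hp'
    simp only [Sigma.mk.inj_iff, heq_eq_eq] at h
    obtain ⟨h1, rfl⟩ := h
    have hyS : y ∈ S := (Finset.mem_erase.mp hp.2).2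
    have hyS' : y ∈ S' := (Finset.mem_erase.mp hp'.2).2
    have hS : S = S' := by
      rw [← Finset.insert_erase hyS, ← Finset.insert_erase hyS', h1]
    subst hS
    rfl

end Type2

section Steps
variable {n1 n2 : ℕ}

lemma w_step {n s : ℕ} (hs : 1 ≤ s) (hsn : s + 1 ≤ n) (N N' : ℕ)
    (h : (n - s) * N ≤ s * N') :
    ((Nat.factorial (s-1) : ℚ) * (Nat.factorial (n-s) : ℚ) / (Nat.factorial n : ℚ)) * N
      ≤ ((Nat.factorial s : ℚ) * (Nat.factorial (n-s-1) : ℚ) / (Nat.factorial n : ℚ)) * N' := by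
  have h1 : Nat.factorial s = s * Nat.factorial (s-1) := by
    conv_lhs => rw [show s = (s-1)+1 by omega]
    rw [Nat.factorial_succ]
    congr 1
    omega
  have h2 : Nat.factorial (n-s) = (n-s) * Nat.factorial (n-s-1) := by
    conv_lhs => rw [show n-s = (n-s-1)+1 by omega]
    rw [Nat.factorial_succ]
    congr 1
    omega
  have hnat : Nat.factorial (s-1) * Nat.factorial (n-s) * N
      ≤ Nat.factorial s * Nat.factorial (n-s-1) * N' := by
    rw [h1, h2]
    calc Nat.factorial (s-1) * ((n-s) * Nat.factorial (n-s-1)) * N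
        = Nat.factorial (s-1) * Nat.factorial (n-s-1) * ((n-s) * N) := by ring
      _ ≤ Nat.factorial (s-1) * Nat.factorial (n-s-1) * (s * N') := Nat.mul_le_mul_left _ h
      _ = s * Nat.factorial (s-1) * Nat.factorial (n-s-1) * N' := by ring
  have hpos : (0:ℚ) < (Nat.factorial n : ℚ) := by exact_mod_cast Nat.factorial_pos n
  rw [div_mul_eq_mul_div, div_mul_eq_mul_div, div_le_div_iff₀ hpos hpos]
  have := (Nat.cast_le (α := ℚ)).mpr hnat
  push_cast at this ⊢
  nlinarith [this, hpos]

lemma w_step' {n s : ℕ} (hs : 1 ≤ s) (hsn : s + 1 ≤ n) (N N' : ℕ)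
    (h : s * N' ≤ (n - s) * N) :
    ((Nat.factorial s : ℚ) * (Nat.factorial (n-s-1) : ℚ) / (Nat.factorial n : ℚ)) * N'
      ≤ ((Nat.factorial (s-1) : ℚ) * (Nat.factorial (n-s) : ℚ) / (Nat.factorial n : ℚ)) * N := by
  have h1 : Nat.factorial s = s * Nat.factorial (s-1) := by
    conv_lhs => rw [show s = (s-1)+1 by omega]
    rw [Nat.factorial_succ]
    congr 1
    omega
  have h2 : Nat.factorial (n-s) = (n-s) * Nat.factorial (n-s-1) := by
    conv_lhs => rw [show n-s = (n-s-1)+1 by omega]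
    rw [Nat.factorial_succ]
    congr 1
    omega
  have hnat : Nat.factorial s * Nat.factorial (n-s-1) * N'
      ≤ Nat.factorial (s-1) * Nat.factorial (n-s) * N := by
    rw [h1, h2]
    calc s * Nat.factorial (s-1) * Nat.factorial (n-s-1) * N'
        = Nat.factorial (s-1) * Nat.factorial (n-s-1) * (s * N') := by ring
      _ ≤ Nat.factorial (s-1) * Nat.factorial (n-s-1) * ((n-s) * N) := Nat.mul_le_mul_left _ h
      _ = Nat.factorial (s-1) * ((n-s) * Nat.factorial (n-s-1)) * N := by ring
  have hpos : (0:ℚ) < (Nat.factorial n : ℚ) := by exact_mod_cast Nat.factorial_pos n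
  rw [div_mul_eq_mul_div, div_mul_eq_mul_div, div_le_div_iff₀ hpos hpos]
  have := (Nat.cast_le (α := ℚ)).mpr hnat
  push_cast at this ⊢
  nlinarith [this, hpos]

lemma SS2_step_b (a b : ℕ) (j : Fin (n1+n2)) (hj : n1 ≤ (j:ℕ)) (ha : 1 ≤ a)
    (hab : a + b + 1 ≤ n1 + n2) :
    SSindex (BipWinning n1 n2 a b) j ≤ SSindex (BipWinning n1 n2 a (b+1)) j := by
  rw [SS2_eq a b j hj ha (by omega), SS2_eq a (b+1) j hj ha (by omega)]
  have e1 : a + (b+1) - 1 = a + b := by omega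
  have e2 : n1 + n2 - (a + (b+1)) = n1 + n2 - (a+b) - 1 := by omega
  rw [e1, e2]
  exact w_step (by omega) (by omega) _ _ (card_ineq_b a b j hj)

lemma SS2_step_a (a b : ℕ) (j : Fin (n1+n2)) (hj : n1 ≤ (j:ℕ)) (ha : 1 ≤ a)
    (hab : a + 1 + b ≤ n1 + n2) :
    SSindex (BipWinning n1 n2 (a+1) b) j ≤ SSindex (BipWinning n1 n2 a b) j := by
  rw [SS2_eq (a+1) b j hj (by omega) (by omega), SS2_eq a b j hj ha (by omega)]
  have e1 : a + 1 + b - 1 = a + b := by omega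
  have e2 : n1 + n2 - (a + 1 + b) = n1 + n2 - (a+b) - 1 := by omega
  have e3 : a + 1 + b = (a + b) + 1 := by omega
  rw [e1, e2]
  have h := card_ineq_a a b j hj
  have h' : (a+b) * Nswing n1 n2 (a+1) b j
      ≤ (n1 + n2 - (a+b)) * Nswing n1 n2 a b j := h
  exact w_step' (by omega) (by omega) _ _ h'

lemma SS2_mono_b (a b b' : ℕ) (j : Fin (n1+n2)) (hj : n1 ≤ (j:ℕ)) (ha : 1 ≤ a)
    (hbb : b ≤ b') (hb' : a + b' ≤ n1 + n2) :
    SSindex (BipWinning n1 n2 a b) j ≤ SSindex (BipWinning n1 n2 a b') j := by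
  revert hb'
  induction b', hbb using Nat.le_induction with
  | base => intro _; exact le_rfl
  | succ k hk ih =>
    intro h
    exact le_trans (ih (by omega)) (SS2_step_b a k j hj ha (by omega))

lemma SS2_anti_a (a a' b : ℕ) (j : Fin (n1+n2)) (hj : n1 ≤ (j:ℕ)) (ha : 1 ≤ a)
    (haa : a ≤ a') (ha' : a' + b ≤ n1 + n2) :
    SSindex (BipWinning n1 n2 a' b) j ≤ SSindex (BipWinning n1 n2 a b) j := by
  revert ha'
  induction a', haa using Nat.le_induction with
  | base => intro _; exact le_rfl
  | succ k hk ih =>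
    intro h
    exact le_trans (SS2_step_a k b j hj (by omega) (by omega)) (ih (by omega))

lemma SS2_zero (c : ℕ) (hc : 1 ≤ c) (j : Fin (n1+n2)) (hj : n1 ≤ (j:ℕ))
    (hcn : c ≤ n1 + n2) :
    SSindex (BipWinning n1 n2 c 0) j = 0 := by
  rw [SS2_eq c 0 j hj hc (by omega)]
  have hN : Nswing n1 n2 c 0 j = 0 := by
    rw [Nswing, Finset.card_eq_zero, Finset.filter_eq_empty_iff]
    rintro S - ⟨hcard, hm, ht⟩
    have h1 : (S.filter fun x : Fin (n1+n2) => (x:ℕ) < n1) ⊆ S.erase j := by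
      intro x hx
      rw [Finset.mem_filter] at hx
      rw [Finset.mem_erase]
      exact ⟨fun he => by subst he; omega, hx.1⟩
    have h2 := Finset.card_le_card h1
    rw [Finset.card_erase_of_mem hm, hcard] at h2
    omega
  rw [hN]
  simp

lemma SS2_pos (hn1 : 1 ≤ n1) (hn2 : 1 ≤ n2) (j : Fin (n1+n2)) (hj : n1 ≤ (j:ℕ)) :
    0 < SSindex (BipWinning n1 n2 n1 1) j := by
  rw [SS2_eq n1 1 j hj hn1 (by omega)]
  apply mul_pos
  · apply div_pos
    · apply mul_pos <;> exact_mod_cast Nat.factorial_pos _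
    · exact_mod_cast Nat.factorial_pos _
  · rw [Nat.cast_pos, Nswing, Finset.card_pos]
    have hjn : j ∉ (univ.filter fun x : Fin (n1+n2) => (x:ℕ) < n1) := by
      rw [Finset.mem_filter]
      push_neg
      intro
      omega
    refine ⟨insert j (univ.filter fun x : Fin (n1+n2) => (x:ℕ) < n1), ?_⟩
    rw [Finset.mem_filter]
    refine ⟨Finset.mem_univ _, ?_, Finset.mem_insert_self _ _, ?_⟩
    · rw [Finset.card_insert_of_notMem hjn, card_type1]
    · have hsub : (univ.filter fun x : Fin (n1+n2) => (x:ℕ) < n1)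
          ⊆ (insert j (univ.filter fun x : Fin (n1+n2) => (x:ℕ) < n1)).filter
              fun x : Fin (n1+n2) => (x:ℕ) < n1 := by
        intro x hx
        rw [Finset.mem_filter] at hx ⊢
        exact ⟨Finset.mem_insert_of_mem (Finset.mem_filter.mpr hx), hx.2⟩
      calc n1 = (univ.filter fun x : Fin (n1+n2) => (x:ℕ) < n1).card := (card_type1 _ _).symm
        _ ≤ _ := Finset.card_le_card hsub

lemma SS2_lt (hn1 : 1 ≤ n1) (hn2 : 2 ≤ n2) (j : Fin (n1+n2)) (hj : n1 ≤ (j:ℕ)) :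
    SSindex (BipWinning n1 n2 1 (n2-1)) j < 1 / ((n1:ℚ) + (n2:ℚ)) := by
  rw [SS2_eq 1 (n2-1) j hj le_rfl (by omega)]
  have hs : 1 + (n2 - 1) = n2 := by omega
  rw [hs]
  set M := (univ.filter fun S : Finset (Fin (n1+n2)) => S.card = n2 ∧ j ∈ S).card with hMdef
  have hM : M = Nat.choose (n1+n2-1) (n2-1) := by
    rw [hMdef]
    rw [show Nat.choose (n1+n2-1) (n2-1) = ((univ.erase j).powersetCard (n2-1)).card by
      rw [Finset.card_powersetCard, Finset.card_erase_of_mem (Finset.mem_univ j),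
        Finset.card_univ, Fintype.card_fin]]
    apply Finset.card_bij' (fun S _ => S.erase j) (fun T _ => insert j T)
    · intro S hS
      have hS' : S.card = n2 ∧ j ∈ S := by simpa using hS
      exact Finset.insert_erase hS'.2
    · intro T hT
      have hT' : T ⊆ univ.erase j ∧ T.card = n2 - 1 := by
        simpa [Finset.mem_powersetCard] using hT
      exact Finset.erase_insert (fun h => (Finset.mem_erase.mp (hT'.1 h)).1 rfl)
    · intro S hS
      have hS' : S.card = n2 ∧ j ∈ S := by simpa using hS
      rw [Finset.mem_powersetCard]
      exact ⟨Finset.erase_subset_erase j (Finset.subset_univ S),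
        by rw [Finset.card_erase_of_mem hS'.2, hS'.1]⟩
    · intro T hT
      have hT' : T ⊆ univ.erase j ∧ T.card = n2 - 1 := by
        simpa [Finset.mem_powersetCard] using hT
      have hjT : j ∉ T := fun h => (Finset.mem_erase.mp (hT'.1 h)).1 rfl
      rw [Finset.mem_filter]
      refine ⟨Finset.mem_univ _, ?_, Finset.mem_insert_self _ _⟩
      rw [Finset.card_insert_of_notMem hjT, hT'.2]
      omega
  have hNM : Nswing n1 n2 1 (n2-1) j < M := by
    apply Finset.card_lt_card
    have hT2card : (univ.filter fun x : Fin (n1+n2) => n1 ≤ (x:ℕ)).card = n2 := by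
      have e0 : (univ.filter fun x : Fin (n1+n2) => n1 ≤ (x:ℕ))
          = univ.filter fun x : Fin (n1+n2) => ¬ ((x:ℕ) < n1) :=
        Finset.filter_congr (fun x _ => by simp [Nat.not_lt])
      rw [e0]
      exact card_type2 n1 n2
    rw [Finset.ssubset_iff_of_subset]
    · refine ⟨univ.filter fun x : Fin (n1+n2) => n1 ≤ (x:ℕ), ?_, ?_⟩
      · rw [Finset.mem_filter]
        exact ⟨Finset.mem_univ _, by omega, Finset.mem_filter.mpr
          ⟨Finset.mem_univ _, hj⟩⟩
      · rw [Finset.mem_filter]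
        push_neg
        intro _ _ _
        have hemp : (univ.filter fun x : Fin (n1+n2) => n1 ≤ (x:ℕ)).filter
            (fun x : Fin (n1+n2) => (x:ℕ) < n1) = ∅ :=
          Finset.filter_false_of_mem (fun x hx => by
            rw [Finset.mem_filter] at hx; omega)
        rw [hemp]
        simp
    · intro S hS
      rw [Finset.mem_filter] at hS ⊢
      exact ⟨hS.1, by omega, hS.2.2.1⟩
  -- identity : w(n2) * M = 1/(n1+n2)
  have hid : Nat.choose (n1+n2-1) (n2-1) * Nat.factorial (n2-1) * Nat.factorial n1
      = Nat.factorial (n1+n2-1) := by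
    have h := Nat.choose_mul_factorial_mul_factorial (show n2-1 ≤ n1+n2-1 by omega)
    rw [show n1+n2-1-(n2-1) = n1 by omega] at h
    exact h
  have hfacn : (Nat.factorial (n1+n2) : ℚ)
      = ((n1:ℚ)+(n2:ℚ)) * (Nat.factorial (n1+n2-1) : ℚ) := by
    rw [show n1+n2 = (n1+n2-1)+1 by omega, Nat.factorial_succ]
    push_cast
    have h9 : ((n1+n2-1 : ℕ):ℚ) = (n1:ℚ) + (n2:ℚ) - 1 := by
      push_cast [Nat.cast_sub (show 1 ≤ n1+n2 by omega)]
      ring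
    rw [h9]
    ring
  have hwM : ((Nat.factorial (n2-1) : ℚ) * (Nat.factorial (n1+n2-n2) : ℚ)
      / (Nat.factorial (n1+n2) : ℚ)) * (M:ℚ) = 1 / ((n1:ℚ)+(n2:ℚ)) := by
    rw [show n1+n2-n2 = n1 by omega, hM]
    rw [div_mul_eq_mul_div]
    have hkey : (Nat.factorial (n2-1) : ℚ) * (Nat.factorial n1 : ℚ)
        * (Nat.choose (n1+n2-1) (n2-1) : ℚ) = (Nat.factorial (n1+n2-1) : ℚ) := by
      have hnat9 : Nat.factorial (n2-1) * Nat.factorial n1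
          * Nat.choose (n1+n2-1) (n2-1) = Nat.factorial (n1+n2-1) := by
        rw [← hid]; ring
      exact_mod_cast hnat9
    rw [mul_assoc, mul_comm ((Nat.factorial n1 : ℚ)) _]
    rw [← mul_assoc, mul_assoc, mul_comm ((Nat.choose (n1+n2-1) (n2-1) : ℚ)) _, ← mul_assoc]
    rw [hkey, hfacn]
    have hnz : ((n1:ℚ)+(n2:ℚ)) ≠ 0 := by positivity
    have hfz : (Nat.factorial (n1+n2-1) : ℚ) ≠ 0 := by
      exact_mod_cast Nat.factorial_ne_zero _
    field_simp
  rw [← hwM]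
  have hwpos : (0:ℚ) < (Nat.factorial (n2-1) : ℚ) * (Nat.factorial (n1+n2-n2) : ℚ)
      / (Nat.factorial (n1+n2) : ℚ) := by
    apply div_pos
    · apply mul_pos <;> exact_mod_cast Nat.factorial_pos _
    · exact_mod_cast Nat.factorial_pos _
  apply mul_lt_mul_of_pos_left _ hwpos
  exact_mod_cast hNM

end Steps

section FinalAlgebra

lemma deriveI_lt {p q x y : ℚ} (hp : 0 < p) (hq : 0 < q)
    (hrel : p * x + q * y = 1) (hy : y < 1/(p+q)) : 1/(p+q) < x := by
  have hn : 0 < p + q := by linarith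
  have hy' : y * (p+q) < 1 := (lt_div_iff₀ hn).mp hy
  rw [div_lt_iff₀ hn]
  by_contra hcon
  push_neg at hcon
  have e2 : (p*x)*(p+q) + (q*y)*(p+q) = p + q := by linear_combination (p+q) * hrel
  nlinarith [mul_lt_mul_of_pos_left hy' hq, mul_le_mul_of_nonneg_left hcon hp.le]

lemma deriveI_le {p q x x' y y' : ℚ} (hp : 0 < p) (hq : 0 < q)
    (hrel : p * x + q * y = 1) (hrel' : p * x' + q * y' = 1) (hy : y' ≤ y) : x ≤ x' := by
  have h1 : p * x ≤ p * x' := by nlinarith [mul_le_mul_of_nonneg_left hy hq.le]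
  exact le_of_mul_le_mul_left h1 hp

lemma deriveI_lt_top {p q x y : ℚ} (hp : 0 < p) (hq : 0 < q)
    (hrel : p * x + q * y = 1) (hy : 0 < y) : x < 1/p := by
  rw [lt_div_iff₀ hp, mul_comm]
  nlinarith [mul_pos hq hy]

lemma deriveI_eq {p q x y : ℚ} (hp : 0 < p) (hrel : p * x + q * y = 1) (hy : y = 0) :
    x = 1/p := by
  rw [eq_div_iff hp.ne', mul_comm]
  rw [hy] at hrel
  linarith

end FinalAlgebra


theorem SS_index_bounds (n1 n2 m1 m2 : ℕ) (hn1 : 1 ≤ n1) (hn2 : 2 ≤ n2)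
    (hm1 : 1 ≤ m1) (hm1n : m1 ≤ n1) (hm2 : 1 ≤ m2) (hm2n : m2 ≤ n2 - 1)
    (i j : Fin (n1 + n2)) (hi : (i : ℕ) < n1) (hj : n1 ≤ (j : ℕ)) :
    (1 / ((n1 : ℚ) + (n2 : ℚ)) < SSindex (BipWinning n1 n2 1 (n2 - 1)) i ∧
      SSindex (BipWinning n1 n2 1 (n2 - 1)) i ≤ SSindex (BipWinning n1 n2 m1 m2) i ∧
      SSindex (BipWinning n1 n2 m1 m2) i ≤ SSindex (BipWinning n1 n2 n1 1) i ∧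
      SSindex (BipWinning n1 n2 n1 1) i < 1 / (n1 : ℚ) ∧
      (∀ c : ℕ, 1 ≤ c → c ≤ n1 → SSindex (BipWinning n1 n2 c 0) i = 1 / (n1 : ℚ))) ∧
    (SSindex (BipWinning n1 n2 1 (n2 - 1)) j < 1 / ((n1 : ℚ) + (n2 : ℚ)) ∧
      SSindex (BipWinning n1 n2 m1 m2) j ≤ SSindex (BipWinning n1 n2 1 (n2 - 1)) j ∧
      SSindex (BipWinning n1 n2 n1 1) j ≤ SSindex (BipWinning n1 n2 m1 m2) j ∧
      0 < SSindex (BipWinning n1 n2 n1 1) j ∧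
      (∀ c : ℕ, 1 ≤ c → c ≤ n1 → SSindex (BipWinning n1 n2 c 0) j = 0)) := by
  have hn1q : (0:ℚ) < (n1:ℚ) := by exact_mod_cast hn1
  have hn2q : (0:ℚ) < (n2:ℚ) := by exact_mod_cast (show 0 < n2 by omega)
  have j1 : SSindex (BipWinning n1 n2 1 (n2-1)) j < 1 / ((n1:ℚ) + (n2:ℚ)) :=
    SS2_lt hn1 hn2 j hj
  have j2 : SSindex (BipWinning n1 n2 m1 m2) j ≤ SSindex (BipWinning n1 n2 1 (n2-1)) j :=
    le_trans (SS2_anti_a 1 m1 m2 j hj le_rfl hm1 (by omega))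
      (SS2_mono_b 1 m2 (n2-1) j hj le_rfl (by omega) (by omega))
  have j3 : SSindex (BipWinning n1 n2 n1 1) j ≤ SSindex (BipWinning n1 n2 m1 m2) j :=
    le_trans (SS2_anti_a m1 n1 1 j hj hm1 hm1n (by omega))
      (SS2_mono_b m1 1 m2 j hj hm1 hm2 (by omega))
  have j4 : 0 < SSindex (BipWinning n1 n2 n1 1) j := SS2_pos hn1 (by omega) j hj
  have j5 : ∀ c : ℕ, 1 ≤ c → c ≤ n1 → SSindex (BipWinning n1 n2 c 0) j = 0 :=
    fun c hc hcn => SS2_zero c hc j hj (by omega)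
  have R : ∀ a b : ℕ, 1 ≤ a → a ≤ n1 → a + b ≤ n1 + n2 →
      (n1:ℚ) * SSindex (BipWinning n1 n2 a b) i
        + (n2:ℚ) * SSindex (BipWinning n1 n2 a b) j = 1 :=
    fun a b ha han hab => bip_rel ha han hab i j hi hj
  have R1 := R 1 (n2-1) le_rfl hn1 (by omega)
  have Rm := R m1 m2 hm1 hm1n (by omega)
  have Rn := R n1 1 hn1 le_rfl (by omega)
  refine ⟨⟨?_, ?_, ?_, ?_, ?_⟩, j1, j2, j3, j4, j5⟩
  · exact deriveI_lt hn1q hn2q R1 j1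
  · exact deriveI_le hn1q hn2q R1 Rm j2
  · exact deriveI_le hn1q hn2q Rm Rn j3
  · exact deriveI_lt_top hn1q hn2q Rn j4
  · intro c hc hcn
    exact deriveI_eq hn1q (R c 0 hc hcn (by omega)) (j5 c hc hcn)
end

section
/- Let (N, W) be a simple game with n players and let (N, W*) be its dual. Then for every player i and every s ∈ {1,…,n}, the number of swings for i in W of cardinality s equals the number of swings for i in W* of cardinality n − s + 1. Consequently, the total number of swings satisfies c_i(N,W) = c_i(N,W*) for every player i, and the Shapley–Shubik index satisfies SS_i(N,W) = SS_i(N,W*) for every player i. -/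
open Finset

/-- The dual game of a simple game: `S` is winning in the dual iff `N ∖ S` is losing. -/
def DualWin {n : ℕ} (Win : Finset (Fin n) → Prop) (S : Finset (Fin n)) : Prop :=
  ¬ Win Sᶜ

lemma erase_compl' {n : ℕ} (i : Fin n) (A : Finset (Fin n)) :
    Aᶜ.erase i = (insert i A)ᶜ := by
  ext x; simp [Finset.mem_erase, Finset.mem_compl, Finset.mem_insert]

lemma fS_erase {n : ℕ} {i : Fin n} {S : Finset (Fin n)} (h : i ∈ S) :
    ((S.erase i)ᶜ).erase i = Sᶜ := by
  rw [erase_compl', Finset.insert_erase h]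

lemma f_inv {n : ℕ} {i : Fin n} {S : Finset (Fin n)} (h : i ∈ S) :
    (((S.erase i)ᶜ).erase i)ᶜ = S := by
  rw [fS_erase h, compl_compl]

lemma f_mem {n : ℕ} {i : Fin n} {S : Finset (Fin n)} (h : i ∈ S) :
    i ∈ (S.erase i)ᶜ := by
  simp [Finset.mem_compl]

lemma f_card {n : ℕ} {i : Fin n} {S : Finset (Fin n)} (h : i ∈ S) :
    ((S.erase i)ᶜ).card = n - S.card + 1 := by
  have h1 : (S.erase i).card = S.card - 1 := Finset.card_erase_of_mem h
  have h2 : ((S.erase i)ᶜ).card = n - (S.erase i).card := by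
    rw [Finset.card_compl, Fintype.card_fin]
  have h3 : 1 ≤ S.card := Finset.card_pos.mpr ⟨i, h⟩
  have h4 : S.card ≤ n := le_trans (Finset.card_le_univ S) (by simp)
  omega

lemma f_injOn {n : ℕ} (i : Fin n) :
    Set.InjOn (fun S : Finset (Fin n) => (S.erase i)ᶜ) {S | i ∈ S} := by
  intro S hS T hT h
  dsimp only at h
  have h2 : S.erase i = T.erase i := compl_injective h
  rw [← Finset.insert_erase (hS : i ∈ S), ← Finset.insert_erase (hT : i ∈ T), h2]

lemma swing_image {n : ℕ} (Win : Finset (Fin n) → Prop) (i : Fin n) :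
    {T : Finset (Fin n) | i ∈ T ∧ DualWin Win T ∧ ¬ DualWin Win (T.erase i)} =
      (fun S : Finset (Fin n) => (S.erase i)ᶜ) ''
        {S | i ∈ S ∧ Win S ∧ ¬ Win (S.erase i)} := by
  ext T
  simp only [Set.mem_image, Set.mem_setOf_eq, DualWin]
  constructor
  · rintro ⟨hiT, hd, hnd⟩
    push_neg at hnd
    refine ⟨(T.erase i)ᶜ, ⟨f_mem hiT, ?_, ?_⟩, f_inv hiT⟩
    · exact hnd
    · rwa [fS_erase hiT]
  · rintro ⟨S, ⟨hiS, hW, hnW⟩, rfl⟩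
    refine ⟨f_mem hiS, by rwa [compl_compl], ?_⟩
    rw [fS_erase hiS, compl_compl]
    exact not_not_intro hW

theorem swings_and_SS_index_of_dual (n : ℕ) (Win : Finset (Fin n) → Prop)
    (hEmpty : ¬ Win ∅) (hFull : Win Finset.univ)
    (hMono : ∀ S T : Finset (Fin n), Win S → S ⊆ T → Win T) (i : Fin n) :
    (∀ s ∈ Finset.Icc 1 n,
      swingCountCard Win i s = swingCountCard (DualWin Win) i (n - s + 1)) ∧
    swingCount Win i = swingCount (DualWin Win) i ∧
    SSindex Win i = SSindex (DualWin Win) i := by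
  have hcard : ∀ s ∈ Finset.Icc 1 n,
      swingCountCard Win i s = swingCountCard (DualWin Win) i (n - s + 1) := by
    intro s hs
    simp only [Finset.mem_Icc] at hs
    unfold swingCountCard
    have himg : {T : Finset (Fin n) | T.card = n - s + 1 ∧ i ∈ T ∧ DualWin Win T ∧
          ¬ DualWin Win (T.erase i)} =
        (fun S : Finset (Fin n) => (S.erase i)ᶜ) ''
          {S | S.card = s ∧ i ∈ S ∧ Win S ∧ ¬ Win (S.erase i)} := by
      have h0 := swing_image Win i
      ext T
      simp only [Set.mem_image, Set.mem_setOf_eq]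
      constructor
      · rintro ⟨hTc, hiT, hd, hnd⟩
        have hmem : T ∈ {T : Finset (Fin n) | i ∈ T ∧ DualWin Win T ∧
            ¬ DualWin Win (T.erase i)} := ⟨hiT, hd, hnd⟩
        rw [h0] at hmem
        obtain ⟨S, ⟨hiS, hW, hnW⟩, rfl⟩ := hmem
        have hSc := f_card (n := n) hiS
        have hSn : S.card ≤ n := le_trans (Finset.card_le_univ S) (by simp)
        beta_reduce at hTc
        obtain ⟨hs1, hs2⟩ := hs
        have hkey : n - S.card + 1 = n - s + 1 := hSc.symm.trans hTc
        refine ⟨S, ⟨?_, hiS, hW, hnW⟩, rfl⟩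
        omega
      · rintro ⟨S, ⟨hSc, hiS, hW, hnW⟩, rfl⟩
        have hc := f_card (n := n) hiS
        have hmem : (S.erase i)ᶜ ∈ {T : Finset (Fin n) | i ∈ T ∧ DualWin Win T ∧
            ¬ DualWin Win (T.erase i)} := by
          rw [h0]; exact ⟨S, ⟨hiS, hW, hnW⟩, rfl⟩
        exact ⟨by rw [hc, hSc], hmem⟩
    rw [himg, Set.ncard_image_of_injOn ((f_injOn i).mono (fun S hS => hS.2.1))]
  refine ⟨hcard, ?_, ?_⟩
  · unfold swingCount
    rw [swing_image Win i,
      Set.ncard_image_of_injOn ((f_injOn i).mono (fun S hS => hS.1))]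
  · unfold SSindex
    rw [Finset.sum_nbij' (i := fun s => n - s + 1) (j := fun s => n - s + 1)]
    · intro s hs; simp only [Finset.mem_Icc] at hs ⊢; omega
    · intro s hs; simp only [Finset.mem_Icc] at hs ⊢; omega
    · intro s hs; simp only [Finset.mem_Icc] at hs; omega
    · intro s hs; simp only [Finset.mem_Icc] at hs; omega
    · intro s hs
      simp only [Finset.mem_Icc] at hs
      rw [← hcard s (Finset.mem_Icc.mpr hs)]
      have h1 : n - s + 1 - 1 = n - s := by omega
      have h2 : n - (n - s + 1) = s - 1 := by omega
      rw [h1, h2]; ring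
end
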